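/- For every n ≥ 2, the automorphisms ε_{1,n}, ε_{2,n}, …, ε_{n-1,n} of the free group F_n pairwise commute and generate a free abelian subgroup of Aut(F_n) of rank n−1. -/

import Mathlib

/-!
For `a ≠ t` the automorphism `ε_{a t}` fixes `x_t` and every `x_b` with `b ≠ a`, so on
generators the `ε_{a t}` with a common `t` visibly commute, and a product `∏ ε_{a t}^{m_a}`
over distinct `a ≠ t` sends `x_b` to `x_t^{-m_b} x_b x_t^{m_b}`. If the product is trivial,
`x_t^{m_b}` commutes with `x_b`, which in a free group forces `m_b = 0`.
-/

/-- The basis-conjugating automorphism ε_{ij} of the free group: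
`x_i ↦ x_j⁻¹ x_i x_j`, `x_l ↦ x_l` for `l ≠ i`. -/
def eps {n : ℕ} (i j : Fin n) : MulAut (FreeGroup (Fin n)) :=
  MonoidHom.toMulEquiv
    (FreeGroup.lift fun l =>
      if l = i then (FreeGroup.of j)⁻¹ * FreeGroup.of i * FreeGroup.of j else FreeGroup.of l)
    (FreeGroup.lift fun l =>
      if l = i then FreeGroup.of j * FreeGroup.of i * (FreeGroup.of j)⁻¹ else FreeGroup.of l)
    (by ext l; by_cases h : l = i <;> by_cases h2 : j = i <;> simp [h, h2, mul_assoc])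
    (by ext l; by_cases h : l = i <;> by_cases h2 : j = i <;> simp [h, h2, mul_assoc])

open FreeGroup (of)

/-- In the infinite dihedral group, with `of t ↦ r 1` and `of b ↦ sr 0`, the left-hand side
becomes `sr (2 * k)`. -/
theorem FreeGroup.eq_zero_of_zpow_conj_of_eq {ι : Type*} [DecidableEq ι] {b t : ι}
    (hbt : b ≠ t) {k : ℤ} (h : of t ^ (-k) * of b * of t ^ k = of b) : k = 0 := by
  let φ : FreeGroup ι →* DihedralGroup 0 :=
    FreeGroup.lift fun l => if l = t then .r 1 else if l = b then .sr 0 else 1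
  simpa [φ, hbt] using congrArg φ h

theorem FreeGroup.mulAut_ext {α : Type*} {f g : MulAut (FreeGroup α)}
    (h : ∀ a, f (of a) = g (of a)) : f = g :=
  MulEquiv.toMonoidHom_injective (FreeGroup.ext_hom _ _ h)

theorem MulAut.zpow_apply_eq_self {G : Type*} [Group G] {f : MulAut G} {x : G} (h : f x = x)
    (k : ℤ) : (f ^ k) x = x := by
  have : f ∈ MulAction.stabilizer (MulAut G) x := MulAction.mem_stabilizer_iff.2 h
  exact MulAction.mem_stabilizer_iff.1 (zpow_mem this k)

section
variable {n : ℕ}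

theorem eps_apply_of (i j l : Fin n) :
    eps i j (of l) = if l = i then (of j)⁻¹ * of i * of j else of l := by
  by_cases h : l = i <;> simp [eps, h]

theorem eps_apply_of_of_ne {i j l : Fin n} (h : l ≠ i) : eps i j (of l) = of l := by
  simp [eps_apply_of, h]

theorem eps_zpow_apply_of_of_ne {i j l : Fin n} (h : l ≠ i) (k : ℤ) :
    (eps i j ^ k) (of l) = of l :=
  MulAut.zpow_apply_eq_self (eps_apply_of_of_ne h) k

theorem eps_inv_apply_of_self {i j : Fin n} (hij : i ≠ j) :
    (eps i j)⁻¹ (of i) = of j * of i * (of j)⁻¹ := by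
  rw [MulAut.inv_def, MulEquiv.symm_apply_eq, map_mul, map_mul, map_inv,
    eps_apply_of_of_ne hij.symm, eps_apply_of, if_pos rfl]
  group

theorem eps_zpow_apply_of_self {i j : Fin n} (hij : i ≠ j) (k : ℤ) :
    (eps i j ^ k) (of i) = of j ^ (-k) * of i * of j ^ k := by
  induction k using Int.induction_on with
  | zero => simp
  | succ k ih =>
    rw [zpow_add_one, MulAut.mul_apply, eps_apply_of, if_pos rfl, map_mul, map_mul, map_inv,
      eps_zpow_apply_of_of_ne hij.symm, ih]
    group
  | pred k ih =>
    rw [zpow_sub_one, MulAut.mul_apply, eps_inv_apply_of_self hij, map_mul, map_mul, map_inv,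
      eps_zpow_apply_of_of_ne hij.symm, ih]
    group

theorem eps_self (i : Fin n) : eps i i = 1 :=
  FreeGroup.mulAut_ext fun l => by by_cases h : l = i <;> simp [eps_apply_of, h]

theorem eps_commute (i j t : Fin n) : Commute (eps i t) (eps j t) := by
  rcases eq_or_ne i t with rfl | hit
  · simp [eps_self]
  rcases eq_or_ne j t with rfl | hjt
  · simp [eps_self]
  rcases eq_or_ne i j with rfl | hij
  · exact .refl _
  refine FreeGroup.mulAut_ext fun l => ?_
  by_cases hl : l = i <;> by_cases hl' : l = j <;> simp_all [eps_apply_of, eq_comm]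

theorem list_prod_map_eps_zpow_apply_of {ι : Type*} [DecidableEq ι] {e : ι → Fin n}
    (he : Function.Injective e) {t : Fin n} (het : ∀ a, e a ≠ t) (m : ι → ℤ) {L : List ι}
    (hL : L.Nodup) (b : ι) :
    (L.map fun a => eps (e a) t ^ m a).prod (of (e b)) =
      if b ∈ L then of t ^ (-m b) * of (e b) * of t ^ m b else of (e b) := by
  induction L with
  | nil => simp
  | cons a L ih =>
    obtain ⟨haL, hL⟩ := List.nodup_cons.mp hL
    rw [List.map_cons, List.prod_cons, MulAut.mul_apply, ih hL]
    rcases eq_or_ne b a with rfl | hba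
    · rw [if_neg haL, if_pos List.mem_cons_self, eps_zpow_apply_of_self (het b)]
    have hfix := eps_zpow_apply_of_of_ne (j := t) (he.ne hba) (m a)
    simp only [List.mem_cons, hba, false_or]
    split_ifs
    · rw [map_mul, map_mul, map_zpow, map_zpow, hfix, eps_zpow_apply_of_of_ne (het a).symm]
    · exact hfix
end

/-- For every `n ≥ 2` (here `n + 2`), the automorphisms
`ε_{1,n}, ε_{2,n}, …, ε_{n-1,n}` (0-based: `eps k.castSucc (Fin.last (n+1))`)
pairwise commute and generate a free abelian group of rank `n - 1`: they are
`ℤ`-linearly independent, i.e. any product with integer exponents equals the identity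
only when all exponents vanish. -/
theorem eps_to_last_free_abelian (n : ℕ) :
    (∀ a b : Fin (n + 1),
      Commute (eps a.castSucc (Fin.last (n + 1))) (eps b.castSucc (Fin.last (n + 1)))) ∧
    ∀ m : Fin (n + 1) → ℤ,
      (List.ofFn fun a : Fin (n + 1) =>
        (eps a.castSucc (Fin.last (n + 1))) ^ (m a)).prod = 1 → m = 0 := by
  refine ⟨fun a b => eps_commute _ _ _, fun m hm => funext fun b => ?_⟩
  have hb := list_prod_map_eps_zpow_apply_of (Fin.castSucc_injective _)
    (fun a => (Fin.castSucc_lt_last a).ne) m (List.nodup_finRange _) b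
  rw [← List.ofFn_eq_map, hm, if_pos (List.mem_finRange b)] at hb
  exact FreeGroup.eq_zero_of_zpow_conj_of_eq (Fin.castSucc_lt_last b).ne hb.symm
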